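/- The assignment sending a full, faithful, level-preserving FOLDS morphism I : L → L' to the induced interpretation I* : LTT_L → LTT_{L'} is functorial: it preserves identities and composition. -/
import Mathlib


/-! FOLDS signatures (with a level function) and the category `FOLDS_i` of
full, faithful, level-preserving FOLDS morphisms; the induced interpretation
`I*` on the syntax (sorts, contexts, formulas) of the logical type theories. -/

structure FSig where
  S : Type
  Arr : S → Type
  cod : ∀ {A : S}, Arr A → S
  comp : ∀ {A : S} (f : Arr A), Arr (cod f) → Arr A
  lvl : S → ℕ

/-- A full, faithful, level-preserving FOLDS morphism: fullness and
faithfulness are encoded by the family of equivalences on arrows. -/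
structure FHom (L L' : FSig) where
  obj : L.S → L'.S
  arr : ∀ A : L.S, L.Arr A ≃ L'.Arr (obj A)
  cod_eq : ∀ (A : L.S) (f : L.Arr A), L'.cod ((arr A) f) = obj (L.cod f)
  comp_eq : ∀ (A : L.S) (f : L.Arr A) (p : L.Arr (L.cod f))
      (q : L'.Arr (L'.cod ((arr A) f))),
      HEq ((arr (L.cod f)) p) q → (arr A) (L.comp f p) = L'.comp ((arr A) f) q
  lvl_eq : ∀ A, L'.lvl (obj A) = L.lvl A

def FHom.id (L : FSig) : FHom L L where
  obj := _root_.id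
  arr := fun _ => Equiv.refl _
  cod_eq := fun _ _ => rfl
  comp_eq := by intro A f p q hq; exact congrArg (fun t => L.comp f t) (eq_of_heq hq)
  lvl_eq := fun _ => rfl

theorem FHom.arr_congr {L L' : FSig} (G : FHom L L') {A B : L.S} (h : A = B)
    (a : L.Arr A) (b : L.Arr B) (hab : HEq a b) :
    HEq ((G.arr A) a) ((G.arr B) b) := by
  subst h; rw [eq_of_heq hab]

def FHom.comp {L L' L'' : FSig} (F : FHom L L') (G : FHom L' L'') :
    FHom L L'' where
  obj := fun A => G.obj (F.obj A)
  arr := fun A => (F.arr A).trans (G.arr (F.obj A))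
  cod_eq := by intro A f; simp only [Equiv.trans_apply]; rw [G.cod_eq, F.cod_eq]
  comp_eq := by
    intro A f p q hq
    simp only [Equiv.trans_apply]
    set q₁ : L'.Arr (L'.cod ((F.arr A) f)) :=
      cast (congrArg L'.Arr (F.cod_eq A f)).symm ((F.arr (L.cod f)) p) with hq₁
    have h1 : HEq ((F.arr (L.cod f)) p) q₁ := (cast_heq _ _).symm
    have e1 := F.comp_eq A f p q₁ h1
    have h2 : HEq ((G.arr (L'.cod ((F.arr A) f))) q₁)
        ((G.arr (F.obj (L.cod f))) ((F.arr (L.cod f)) p)) :=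
      G.arr_congr (F.cod_eq A f) q₁ ((F.arr (L.cod f)) p) (cast_heq _ _)
    have e2 := G.comp_eq (F.obj A) ((F.arr A) f) q₁ q (h2.trans hq)
    rw [e1, e2]
  lvl_eq := by intro A; rw [G.lvl_eq, F.lvl_eq]

/-! The syntax of `LTT_L`. -/

abbrev FOLDSVar := ℕ

structure SortExpr (L : FSig) where
  head : L.S
  args : L.Arr head → FOLDSVar

abbrev FOLDSCon (L : FSig) := List (FOLDSVar × SortExpr L)

inductive Fml (L : FSig) where
  | bot | top
  | and (φ ψ : Fml L)
  | or (φ ψ : Fml L)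
  | imp (φ ψ : Fml L)
  | all (x : FOLDSVar) (K : SortExpr L) (φ : Fml L)
  | ex (x : FOLDSVar) (K : SortExpr L) (φ : Fml L)

/-- The interpretation `I*` on sorts:
`A(x_f)_{f ∈ A//L} ↦ I(A)(x_{I(f)})`, reindexing the arguments along the
bijection `A//L ≃ I(A)//L'` given by fullness and faithfulness. -/
def mapSort {L L' : FSig} (F : FHom L L') (K : SortExpr L) : SortExpr L' :=
  ⟨F.obj K.head, fun f' => K.args ((F.arr K.head).symm f')⟩

def mapCon {L L' : FSig} (F : FHom L L') (Γ : FOLDSCon L) : FOLDSCon L' :=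
  Γ.map (fun p => (p.1, mapSort F p.2))

def mapFml {L L' : FSig} (F : FHom L L') : Fml L → Fml L'
  | .bot => .bot
  | .top => .top
  | .and φ ψ => .and (mapFml F φ) (mapFml F ψ)
  | .or φ ψ => .or (mapFml F φ) (mapFml F ψ)
  | .imp φ ψ => .imp (mapFml F φ) (mapFml F ψ)
  | .all x K φ => .all x (mapSort F K) (mapFml F φ)
  | .ex x K φ => .ex x (mapSort F K) (mapFml F φ)

/-- The assignment `I ↦ I*` from full, faithful, level-preserving
FOLDS morphisms to interpretations of the logical type theories is functorial:
it preserves identities and composition (on sorts, contexts and formulas). -/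
theorem interpretation_functorial :
    (∀ (L : FSig) (K : SortExpr L), mapSort (FHom.id L) K = K) ∧
    (∀ (L : FSig) (Γ : FOLDSCon L), mapCon (FHom.id L) Γ = Γ) ∧
    (∀ (L : FSig) (φ : Fml L), mapFml (FHom.id L) φ = φ) ∧
    (∀ (L L' L'' : FSig) (F : FHom L L') (G : FHom L' L'') (K : SortExpr L),
      mapSort (F.comp G) K = mapSort G (mapSort F K)) ∧
    (∀ (L L' L'' : FSig) (F : FHom L L') (G : FHom L' L'') (Γ : FOLDSCon L),
      mapCon (F.comp G) Γ = mapCon G (mapCon F Γ)) ∧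
    (∀ (L L' L'' : FSig) (F : FHom L L') (G : FHom L' L'') (φ : Fml L),
      mapFml (F.comp G) φ = mapFml G (mapFml F φ)) := by
  have hS : ∀ (L : FSig) (K : SortExpr L), mapSort (FHom.id L) K = K := by
    intro L K; rfl
  have hSc : ∀ (L L' L'' : FSig) (F : FHom L L') (G : FHom L' L'') (K : SortExpr L),
      mapSort (F.comp G) K = mapSort G (mapSort F K) := by
    intro L L' L'' F G K; rfl
  refine ⟨hS, ?_, ?_, hSc, ?_, ?_⟩
  · intro L Γ
    induction Γ with
    | nil => rfl
    | cons p t ih => simp [mapCon, hS]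
  · intro L φ
    induction φ with
    | bot => rfl
    | top => rfl
    | and φ ψ ihφ ihψ => simp [mapFml, ihφ, ihψ]
    | or φ ψ ihφ ihψ => simp [mapFml, ihφ, ihψ]
    | imp φ ψ ihφ ihψ => simp [mapFml, ihφ, ihψ]
    | all x K φ ih => simp [mapFml, ih, hS]
    | ex x K φ ih => simp [mapFml, ih, hS]
  · intro L L' L'' F G Γ
    induction Γ with
    | nil => rfl
    | cons p t ih => simp [mapCon, hSc]
  · intro L L' L'' F G φ
    induction φ with
    | bot => rfl
    | top => rfl
    | and φ ψ ihφ ihψ => simp [mapFml, ihφ, ihψ]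
    | or φ ψ ihφ ihψ => simp [mapFml, ihφ, ihψ]
    | imp φ ψ ihφ ihψ => simp [mapFml, ihφ, ihψ]
    | all x K φ ih => simp [mapFml, ih, hSc]
    | ex x K φ ih => simp [mapFml, ih, hSc]
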